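/- If P is a finite connected d-complete poset with maximum element v_0, then for each v ∈ P all saturated chains from v to v_0 have the same length; hence P admits a rank function r : P → ℕ with r(v_0) maximal and r(x) = r(y) + 1 whenever x covers y. -/

import Mathlib

/-- The order relation of the double-tailed diamond `d_k(1)` on `Fin (2*k-2)`. -/
def dtdLE (k : ℕ) (i j : Fin (2 * k - 2)) : Prop :=
  i = j ∨ (i.val < j.val ∧ ¬(i.val = k - 2 ∧ j.val = k - 1))

/-- The order relation of `d_k(1)` with its maximum removed, on `Fin (2*k-3)`. -/
def dtdmLE (k : ℕ) (i j : Fin (2 * k - 3)) : Prop :=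
  i = j ∨ (i.val < j.val ∧ ¬(i.val = k - 2 ∧ j.val = k - 1))

/-- `[w,v]` is a `d_k`-interval: the interval is order-isomorphic to `d_k(1)`. -/
def IsDkInterval {P : Type*} [PartialOrder P] (k : ℕ) (w v : P) : Prop :=
  Nonempty (Subrel ((· ≤ ·) : P → P → Prop) (Set.Icc w v) ≃r dtdLE k)

/-- `I` is a `d_k^-`-interval: for `k = 3` a triple `{w, x, y}` with `w` covered
by both `x` and `y`; for `k ≥ 4` an interval order-isomorphic to `d_k(1)` minus
its maximum. -/
def IsDkmInterval {P : Type*} [PartialOrder P] (k : ℕ) (I : Set P) : Prop :=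
  if k = 3 then ∃ w x y : P, x ≠ y ∧ w ⋖ x ∧ w ⋖ y ∧ I = {w, x, y}
  else ∃ w v : P, I = Set.Icc w v ∧
    Nonempty (Subrel ((· ≤ ·) : P → P → Prop) I ≃r dtdmLE k)

/-- `P` is `d`-complete: conditions (D1), (D2), (D3) hold for every `k ≥ 3`. -/
def IsDComplete (P : Type*) [PartialOrder P] : Prop :=
  ∀ k, 3 ≤ k →
    -- (D1) every `d_k^-`-interval extends by an element covering its maximal
    -- elements to a `d_k`-interval
    (∀ I : Set P, IsDkmInterval k I → ∃ v : P,
        (∀ m ∈ I, (∀ x ∈ I, ¬ m < x) → m ⋖ v) ∧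
        Nonempty (Subrel ((· ≤ ·) : P → P → Prop) (I ∪ {v} : Set P) ≃r dtdLE k)) ∧
    -- (D2) the top of a `d_k`-interval covers only elements of that interval
    (∀ w v : P, IsDkInterval k w v → ∀ u : P, u ⋖ v → u ∈ Set.Icc w v) ∧
    -- (D3) no two `d_k^-`-intervals differ only in their minimal elements
    (∀ I J : Set P, IsDkmInterval k I → IsDkmInterval k J →
        {x ∈ I | ∃ y ∈ I, y < x} = {x ∈ J | ∃ y ∈ J, y < x} → I = J)

section Aux

variable {P : Type*} [PartialOrder P] [Fintype P] [OrderTop P]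

/-- The key diamond property extracted from (D1) for `k = 3`. -/
lemma diamond_of_dComplete (hd : IsDComplete P) {w x y : P} (hxy : x ≠ y)
    (hwx : w ⋖ x) (hwy : w ⋖ y) : ∃ v : P, x ⋖ v ∧ y ⋖ v := by
  obtain ⟨D1, -, -⟩ := hd 3 le_rfl
  have hI : IsDkmInterval 3 ({w, x, y} : Set P) := by
    simp only [IsDkmInterval, if_pos rfl]
    exact ⟨w, x, y, hxy, hwx, hwy, rfl⟩
  obtain ⟨v, hv, -⟩ := D1 _ hI
  have hmax : ∀ a : P, w ⋖ a → ∀ z ∈ ({w, x, y} : Set P), ¬ a < z := by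
    intro a ha z hz
    rcases hz with rfl | rfl | rfl
    · exact fun h => absurd (ha.1.trans h) (lt_irrefl _)
    · exact hwx.2 ha.1
    · exact hwy.2 ha.1
  exact ⟨v, hv x (by simp) (hmax x hwx), hv y (by simp) (hmax y hwy)⟩

lemma cons_chain {n : ℕ} {v z : P} (c : Fin (n + 1) → P) (hc0 : c 0 = z)
    (hcl : c (Fin.last n) = ⊤) (hcc : ∀ i : Fin n, c i.castSucc ⋖ c i.succ)
    (hvz : v ⋖ z) :
    (Fin.cons v c : Fin (n + 2) → P) 0 = v ∧
    (Fin.cons v c : Fin (n + 2) → P) (Fin.last (n + 1)) = ⊤ ∧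
    ∀ i : Fin (n + 1), (Fin.cons v c : Fin (n + 2) → P) i.castSucc ⋖
      (Fin.cons v c : Fin (n + 2) → P) i.succ := by
  refine ⟨rfl, by rw [← Fin.succ_last, Fin.cons_succ]; exact hcl, ?_⟩
  intro i
  induction i using Fin.cases with
  | zero =>
    rw [Fin.castSucc_zero, Fin.cons_zero, Fin.cons_succ, hc0]
    exact hvz
  | succ j =>
    rw [← Fin.succ_castSucc, Fin.cons_succ, Fin.cons_succ]
    exact hcc j

lemma exists_chain_to_top (v : P) :
    ∃ n : ℕ, ∃ c : Fin (n + 1) → P, c 0 = v ∧ c (Fin.last n) = ⊤ ∧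
      ∀ i : Fin n, c i.castSucc ⋖ c i.succ := by
  have wf : WellFounded ((· > ·) : P → P → Prop) :=
    (Finite.to_wellFoundedGT (α := P)).wf
  refine wf.induction
    (C := fun v => ∃ n : ℕ, ∃ c : Fin (n + 1) → P, c 0 = v ∧ c (Fin.last n) = ⊤ ∧
      ∀ i : Fin n, c i.castSucc ⋖ c i.succ) v ?_
  intro v IH
  by_cases hv : v = ⊤
  · exact ⟨0, fun _ => ⊤, hv ▸ rfl, rfl, fun i => i.elim0⟩
  · have hlt : v < ⊤ := lt_top_iff_ne_top.2 hv
    obtain ⟨z, hvz, -⟩ := exists_covBy_le_of_lt hlt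
    obtain ⟨n, c, hc0, hcl, hcc⟩ := IH z hvz.1
    obtain ⟨h0, hl, hc⟩ := cons_chain c hc0 hcl hcc hvz
    exact ⟨n + 1, Fin.cons v c, h0, hl, hc⟩

lemma chain_length_unique (hd : IsDComplete P) :
    ∀ m : ℕ, ∀ v : P, ∀ c : Fin (m + 1) → P, c 0 = v → c (Fin.last m) = ⊤ →
      (∀ i : Fin m, c i.castSucc ⋖ c i.succ) →
      ∀ n : ℕ, ∀ d : Fin (n + 1) → P, d 0 = v → d (Fin.last n) = ⊤ →
      (∀ i : Fin n, d i.castSucc ⋖ d i.succ) → n = m := by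
  intro m
  induction m using Nat.strong_induction_on with
  | _ m IH =>
    intro v c hc0 hcl hcc n d hd0 hdl hdc
    match m, n with
    | 0, 0 => rfl
    | 0, n + 1 =>
      exfalso
      have hvt : v = ⊤ := by rw [← hc0]; exact hcl
      have h1 : v ⋖ d 1 := by
        have := hdc 0
        rwa [Fin.castSucc_zero, hd0, Fin.succ_zero_eq_one] at this
      exact absurd le_top (not_le_of_gt (hvt ▸ h1.1))
    | m + 1, 0 =>
      exfalso
      have hvt : v = ⊤ := by rw [← hd0]; exact hdl
      have h1 : v ⋖ c 1 := by
        have := hcc 0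
        rwa [Fin.castSucc_zero, hc0, Fin.succ_zero_eq_one] at this
      exact absurd le_top (not_le_of_gt (hvt ▸ h1.1))
    | m + 1, n + 1 =>
      -- tails
      set c' : Fin (m + 1) → P := fun i => c i.succ with hc'
      set d' : Fin (n + 1) → P := fun i => d i.succ with hd'
      have hc'l : c' (Fin.last m) = ⊤ := by
        show c (Fin.last m).succ = ⊤
        rw [Fin.succ_last]; exact hcl
      have hc'c : ∀ i : Fin m, c' i.castSucc ⋖ c' i.succ := by
        intro i
        show c i.castSucc.succ ⋖ c i.succ.succ
        rw [Fin.succ_castSucc]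
        exact hcc i.succ
      have hd'l : d' (Fin.last n) = ⊤ := by
        show d (Fin.last n).succ = ⊤
        rw [Fin.succ_last]; exact hdl
      have hd'c : ∀ i : Fin n, d' i.castSucc ⋖ d' i.succ := by
        intro i
        show d i.castSucc.succ ⋖ d i.succ.succ
        rw [Fin.succ_castSucc]
        exact hdc i.succ
      have hvc1 : v ⋖ c 1 := by
        have := hcc 0
        rwa [Fin.castSucc_zero, hc0, Fin.succ_zero_eq_one] at this
      have hvd1 : v ⋖ d 1 := by
        have := hdc 0
        rwa [Fin.castSucc_zero, hd0, Fin.succ_zero_eq_one] at this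
      by_cases hxy : c 1 = d 1
      · have := IH m (Nat.lt_succ_self m) (c 1) c' rfl hc'l hc'c n d' hxy.symm hd'l hd'c
        omega
      · obtain ⟨z, hxz, hyz⟩ := diamond_of_dComplete hd hxy hvc1 hvd1
        obtain ⟨ℓ, e, he0, hel, hec⟩ := exists_chain_to_top z
        obtain ⟨hx0, hxl, hxc⟩ := cons_chain e he0 hel hec hxz
        obtain ⟨hy0, hyl, hyc⟩ := cons_chain e he0 hel hec hyz
        have h1 : ℓ + 1 = m :=
          IH m (Nat.lt_succ_self m) (c 1) c' rfl hc'l hc'c (ℓ + 1)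
            (Fin.cons (c 1) e) hx0 hxl hxc
        have h2 : n = ℓ + 1 :=
          IH (ℓ + 1) (by omega) (d 1) (Fin.cons (d 1) e) hy0 hyl hyc n d'
            rfl hd'l hd'c
        omega

end Aux

/-- In a finite connected `d`-complete poset with maximum element `⊤`, all
saturated chains from a given element `v` to `⊤` have the same length; hence
`P` admits a rank function `r : P → ℕ` with `r ⊤` maximal and `r x = r y + 1`
whenever `x` covers `y`. -/
theorem stmt_4 {P : Type*} [PartialOrder P] [Fintype P] [OrderTop P]
    (hconn : ∀ x y : P, Relation.ReflTransGen (fun a b => a ≤ b ∨ b ≤ a) x y)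
    (hd : IsDComplete P) :
    (∀ (v : P) (m n : ℕ) (c : Fin (m + 1) → P) (d : Fin (n + 1) → P),
      c 0 = v → c (Fin.last m) = ⊤ → (∀ i : Fin m, c i.castSucc ⋖ c i.succ) →
      d 0 = v → d (Fin.last n) = ⊤ → (∀ i : Fin n, d i.castSucc ⋖ d i.succ) →
      m = n) ∧
    (∃ r : P → ℕ, (∀ x : P, r x ≤ r ⊤) ∧ ∀ x y : P, y ⋖ x → r x = r y + 1) := by
  constructor
  · intro v m n c d hc0 hcl hcc hd0 hdl hdc
    exact (chain_length_unique hd m v c hc0 hcl hcc n d hd0 hdl hdc).symm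
  · classical
    choose f c h0 hl hcv using exists_chain_to_top (P := P)
    have funiq : ∀ v : P, ∀ n : ℕ, ∀ d : Fin (n + 1) → P, d 0 = v →
        d (Fin.last n) = ⊤ → (∀ i : Fin n, d i.castSucc ⋖ d i.succ) → n = f v :=
      fun v n d hd0 hdl hdc =>
        chain_length_unique hd (f v) v (c v) (h0 v) (hl v) (hcv v) n d hd0 hdl hdc
    have ftop : f ⊤ = 0 :=
      (funiq ⊤ 0 (fun _ => ⊤) rfl rfl (fun i => i.elim0)).symm
    have fcov : ∀ x y : P, y ⋖ x → f y = f x + 1 := by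
      intro x y hyx
      obtain ⟨k0, kl, kc⟩ := cons_chain (c x) (h0 x) (hl x) (hcv x) hyx
      exact (funiq y (f x + 1) (Fin.cons y (c x)) k0 kl kc).symm
    set N : ℕ := Finset.univ.sup f with hN
    have hfle : ∀ v : P, f v ≤ N := fun v => Finset.le_sup (Finset.mem_univ v)
    refine ⟨fun v => N - f v, fun x => ?_, fun x y hyx => ?_⟩
    · show N - f x ≤ N - f ⊤
      rw [ftop]
      omega
    · show N - f x = N - f y + 1
      have h1 := fcov x y hyx
      have h2 := hfle y
      omega
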